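/- Let (X, μ, ν, ∗, ⋄) be a complete intuitionistic fuzzy metric space with property ♠ in which every IF contractive sequence is a Cauchy sequence. If T : X → X is an intuitionistic fuzzy contractive mapping with contractive constant k ∈ (0,1), then T has a unique fixed point. -/

import Mathlib

open Filter Topology

/-- A continuous t-norm on `[0,1]`. -/
structure IsContTNorm (star : ℝ → ℝ → ℝ) : Prop where
  maps_to : ∀ a ∈ Set.Icc (0:ℝ) 1, ∀ b ∈ Set.Icc (0:ℝ) 1, star a b ∈ Set.Icc (0:ℝ) 1
  comm : ∀ a ∈ Set.Icc (0:ℝ) 1, ∀ b ∈ Set.Icc (0:ℝ) 1, star a b = star b a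
  assoc : ∀ a ∈ Set.Icc (0:ℝ) 1, ∀ b ∈ Set.Icc (0:ℝ) 1, ∀ c ∈ Set.Icc (0:ℝ) 1,
    star (star a b) c = star a (star b c)
  continuous : ContinuousOn (fun p : ℝ × ℝ => star p.1 p.2)
    (Set.Icc (0:ℝ) 1 ×ˢ Set.Icc (0:ℝ) 1)
  star_one : ∀ a ∈ Set.Icc (0:ℝ) 1, star a 1 = a
  mono : ∀ a ∈ Set.Icc (0:ℝ) 1, ∀ b ∈ Set.Icc (0:ℝ) 1, ∀ c ∈ Set.Icc (0:ℝ) 1,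
    ∀ d ∈ Set.Icc (0:ℝ) 1, a ≤ c → b ≤ d → star a b ≤ star c d

/-- A continuous t-conorm on `[0,1]`. -/
structure IsContTConorm (diam : ℝ → ℝ → ℝ) : Prop where
  maps_to : ∀ a ∈ Set.Icc (0:ℝ) 1, ∀ b ∈ Set.Icc (0:ℝ) 1, diam a b ∈ Set.Icc (0:ℝ) 1
  comm : ∀ a ∈ Set.Icc (0:ℝ) 1, ∀ b ∈ Set.Icc (0:ℝ) 1, diam a b = diam b a
  assoc : ∀ a ∈ Set.Icc (0:ℝ) 1, ∀ b ∈ Set.Icc (0:ℝ) 1, ∀ c ∈ Set.Icc (0:ℝ) 1,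
    diam (diam a b) c = diam a (diam b c)
  continuous : ContinuousOn (fun p : ℝ × ℝ => diam p.1 p.2)
    (Set.Icc (0:ℝ) 1 ×ˢ Set.Icc (0:ℝ) 1)
  diam_zero : ∀ a ∈ Set.Icc (0:ℝ) 1, diam a 0 = a
  mono : ∀ a ∈ Set.Icc (0:ℝ) 1, ∀ b ∈ Set.Icc (0:ℝ) 1, ∀ c ∈ Set.Icc (0:ℝ) 1,
    ∀ d ∈ Set.Icc (0:ℝ) 1, a ≤ c → b ≤ d → diam a b ≤ diam c d

/-- An intuitionistic fuzzy metric space structure `(X, μ, ν, ∗, ⋄)` on `X`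
(with the idempotency property (xii)). -/
structure IFMS (X : Type*) where
  mu : X → X → ℝ → ℝ
  nu : X → X → ℝ → ℝ
  star : ℝ → ℝ → ℝ
  dia : ℝ → ℝ → ℝ
  tnorm : IsContTNorm star
  tconorm : IsContTConorm dia
  mu_mem : ∀ x y : X, ∀ t : ℝ, 0 < t → mu x y t ∈ Set.Icc (0:ℝ) 1
  nu_mem : ∀ x y : X, ∀ t : ℝ, 0 < t → nu x y t ∈ Set.Icc (0:ℝ) 1
  sum_le_one : ∀ x y : X, ∀ t : ℝ, 0 < t → mu x y t + nu x y t ≤ 1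
  mu_pos : ∀ x y : X, ∀ t : ℝ, 0 < t → 0 < mu x y t
  mu_eq_one_iff : ∀ x y : X, ∀ t : ℝ, 0 < t → (mu x y t = 1 ↔ x = y)
  mu_symm : ∀ x y : X, ∀ t : ℝ, 0 < t → mu x y t = mu y x t
  mu_triangle : ∀ x y z : X, ∀ s t : ℝ, 0 < s → 0 < t →
    star (mu x y s) (mu y z t) ≤ mu x z (s + t)
  mu_cont : ∀ x y : X, ContinuousOn (mu x y) (Set.Ioi (0:ℝ))
  nu_lt_one : ∀ x y : X, ∀ t : ℝ, 0 < t → nu x y t < 1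
  nu_eq_zero_iff : ∀ x y : X, ∀ t : ℝ, 0 < t → (nu x y t = 0 ↔ x = y)
  nu_symm : ∀ x y : X, ∀ t : ℝ, 0 < t → nu x y t = nu y x t
  nu_triangle : ∀ x y z : X, ∀ s t : ℝ, 0 < s → 0 < t →
    nu x z (s + t) ≤ dia (nu x y s) (nu y z t)
  nu_cont : ∀ x y : X, ContinuousOn (nu x y) (Set.Ioi (0:ℝ))
  star_idem : ∀ a ∈ Set.Ioo (0:ℝ) 1, star a a = a
  dia_idem : ∀ a ∈ Set.Ioo (0:ℝ) 1, dia a a = a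

namespace IFMS

variable {X : Type*}

/-- Convergence of a sequence in an IFMS. -/
def Converges (A : IFMS X) (x : ℕ → X) (l : X) : Prop :=
  ∀ t : ℝ, 0 < t →
    Tendsto (fun n => A.mu (x n) l t) atTop (𝓝 1) ∧
    Tendsto (fun n => A.nu (x n) l t) atTop (𝓝 0)

/-- Cauchy sequences in an IFMS. -/
def IsCauchySeq (A : IFMS X) (x : ℕ → X) : Prop :=
  ∀ r ∈ Set.Ioo (0:ℝ) 1, ∀ t : ℝ, 0 < t → ∃ n₀ : ℕ, ∀ n ≥ n₀, ∀ m ≥ n₀,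
    1 - r < A.mu (x n) (x m) t ∧ A.nu (x n) (x m) t < r

/-- Completeness of an IFMS. -/
def Complete (A : IFMS X) : Prop :=
  ∀ x : ℕ → X, A.IsCauchySeq x → ∃ l : X, A.Converges x l

/-- Property ♠. -/
def PropertySpade (A : IFMS X) : Prop :=
  ∀ x y : X,
    Tendsto (fun t => A.mu x y t) atTop (𝓝 1) ∧
    Tendsto (fun t => A.nu x y t) atTop (𝓝 0)

/-- Intuitionistic fuzzy contractive mapping with contractive constant `k`. -/
def IFContractiveWith (A : IFMS X) (k : ℝ) (f : X → X) : Prop :=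
  ∀ x y : X, ∀ t : ℝ, 0 < t →
    1 / A.mu (f x) (f y) t - 1 ≤ k * (1 / A.mu x y t - 1) ∧
    1 / A.nu (f x) (f y) t - 1 ≥ (1 / k) * (1 / A.nu x y t - 1)

/-- Intuitionistic fuzzy contractive sequence. -/
def IFContractiveSeq (A : IFMS X) (x : ℕ → X) : Prop :=
  ∃ k ∈ Set.Ioo (0:ℝ) 1, ∀ n : ℕ, ∀ t : ℝ, 0 < t →
    1 / A.mu (x (n + 1)) (x (n + 2)) t - 1 ≤ k * (1 / A.mu (x n) (x (n + 1)) t - 1) ∧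
    1 / A.nu (x (n + 1)) (x (n + 2)) t - 1 ≥ (1 / k) * (1 / A.nu (x n) (x (n + 1)) t - 1)

/-- t-uniform continuity. -/
def TUniformlyContinuous (A : IFMS X) (f : X → X) : Prop :=
  ∀ ε ∈ Set.Ioo (0:ℝ) 1, ∃ r ∈ Set.Ioo (0:ℝ) 1, ∀ x y : X, ∀ t : ℝ, 0 < t →
    1 - r ≤ A.mu x y t → A.nu x y t ≤ r →
    1 - ε ≤ A.mu (f x) (f y) t ∧ A.nu (f x) (f y) t ≤ ε

/-- TS-IF contractive mapping with contraction constant `k`. -/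
def TSIFContractiveWith (A : IFMS X) (k : ℝ) (T : X → X) : Prop :=
  ∀ x y : X, ∀ t : ℝ, 0 < t →
    A.mu x y t ≤ k * A.mu (T x) (T y) t ∧
    (1 / k) * A.nu (T x) (T y) t ≤ A.nu x y t

end IFMS

/-!
The Picard iterates of `T` form an IF contractive sequence, hence a Cauchy sequence, hence
converge to some `p`. The `μ`-part of the contraction condition says that `T` does not decrease
`μ`, and since `∗` is idempotent, the triangle inequality through a late iterate shows
`μ(p, T p, 1) ≥ a` for every `a < 1`; so `T p = p`. For two fixed points `p, q` the contraction
condition reads `d ≤ k d` with `d = 1/μ(p, q, t) - 1 ≥ 0`, forcing `d = 0`.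
-/

namespace IFMS

variable {X : Type*} (A : IFMS X)

theorem mu_le_one {x y : X} {t : ℝ} (ht : 0 < t) : A.mu x y t ≤ 1 :=
  (A.mu_mem x y t ht).2

theorem one_le_one_div_mu {x y : X} {t : ℝ} (ht : 0 < t) : 1 ≤ 1 / A.mu x y t :=
  one_le_one_div (A.mu_pos x y t ht) (A.mu_le_one ht)

theorem eq_of_one_le_mu {x y : X} {t : ℝ} (ht : 0 < t) (h : 1 ≤ A.mu x y t) : x = y :=
  (A.mu_eq_one_iff x y t ht).1 (le_antisymm (A.mu_le_one ht) h)

theorem eq_of_forall_le_mu {x y : X} {t : ℝ} (ht : 0 < t)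
    (h : ∀ a ∈ Set.Ioo (0 : ℝ) 1, a ≤ A.mu x y t) : x = y := by
  refine A.eq_of_one_le_mu ht (le_of_forall_lt_imp_le_of_dense fun a ha => ?_)
  rcases le_or_gt a 0 with ha0 | ha0
  · exact ha0.trans (A.mu_pos x y t ht).le
  · exact h a ⟨ha0, ha⟩

/-- Idempotence of `∗` turns the triangle inequality into an ultrametric-type bound. -/
theorem le_mu_add {x y z : X} {s t : ℝ} (hs : 0 < s) (ht : 0 < t) {a : ℝ}
    (ha : a ∈ Set.Ioo (0 : ℝ) 1) (hxy : a ≤ A.mu x y s) (hyz : a ≤ A.mu y z t) :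
    a ≤ A.mu x z (s + t) :=
  calc a = A.star a a := (A.star_idem a ha).symm
    _ ≤ A.star (A.mu x y s) (A.mu y z t) :=
      A.tnorm.mono a (Set.Ioo_subset_Icc_self ha) a (Set.Ioo_subset_Icc_self ha) _
        (A.mu_mem x y s hs) _ (A.mu_mem y z t ht) hxy hyz
    _ ≤ A.mu x z (s + t) := A.mu_triangle x y z s t hs ht

theorem isFixedPt_of_converges_iterate {T : X → X}
    (hT : ∀ x y : X, ∀ t : ℝ, 0 < t → A.mu x y t ≤ A.mu (T x) (T y) t) {x₀ p : X}
    (hp : A.Converges (fun n => T^[n] x₀) p) : Function.IsFixedPt T p := by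
  have hhalf : (0 : ℝ) < 1 / 2 := by norm_num
  refine (A.eq_of_forall_le_mu one_pos fun a ha => ?_).symm
  obtain ⟨N, hN⟩ := eventually_atTop.1 ((hp (1 / 2) hhalf).1.eventually (eventually_gt_nhds ha.2))
  have hleft : a ≤ A.mu p (T^[N + 1] x₀) (1 / 2) := by
    rw [A.mu_symm _ _ _ hhalf]
    exact (hN (N + 1) N.le_succ).le
  have hright : a ≤ A.mu (T^[N + 1] x₀) (T p) (1 / 2) := by
    rw [Function.iterate_succ_apply']
    exact (hN N le_rfl).le.trans (hT _ _ _ hhalf)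
  simpa only [add_halves] using A.le_mu_add hhalf hhalf ha hleft hright

namespace IFContractiveWith

variable {A} {k : ℝ} {T : X → X}

theorem mu_le_mu_map (hT : A.IFContractiveWith k T) (hk : k ≤ 1) {x y : X} {t : ℝ}
    (ht : 0 < t) : A.mu x y t ≤ A.mu (T x) (T y) t := by
  have hd : 0 ≤ 1 / A.mu x y t - 1 := sub_nonneg.2 (A.one_le_one_div_mu ht)
  have hcontr := (hT x y t ht).1
  have hinv : 1 / A.mu (T x) (T y) t ≤ 1 / A.mu x y t := by nlinarith
  exact le_of_one_div_le_one_div (A.mu_pos _ _ t ht) hinv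

theorem ifContractiveSeq_iterate (hT : A.IFContractiveWith k T) (hk : k ∈ Set.Ioo (0 : ℝ) 1)
    (x₀ : X) : A.IFContractiveSeq (fun n => T^[n] x₀) := by
  refine ⟨k, hk, fun n t ht => ?_⟩
  simpa only [Function.iterate_succ_apply'] using hT (T^[n] x₀) (T^[n + 1] x₀) t ht

theorem eq_of_isFixedPt (hT : A.IFContractiveWith k T) (hk : k < 1) {p q : X}
    (hp : Function.IsFixedPt T p) (hq : Function.IsFixedPt T q) : p = q := by
  have hd : 0 ≤ 1 / A.mu p q 1 - 1 := sub_nonneg.2 (A.one_le_one_div_mu one_pos)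
  have hcontr := (hT p q 1 one_pos).1
  rw [hp.eq, hq.eq] at hcontr
  have hinv : 1 / A.mu p q 1 ≤ 1 := by nlinarith
  exact A.eq_of_one_le_mu one_pos
    (le_of_one_div_le_one_div (A.mu_pos p q 1 one_pos) (by simpa only [div_one] using hinv))

end IFContractiveWith

end IFMS

theorem ifContractive_fixed_point_general {X : Type*} [Nonempty X] (A : IFMS X)
    (hcomp : A.Complete)
    (hcs : ∀ x : ℕ → X, A.IFContractiveSeq x → A.IsCauchySeq x)
    (T : X → X) (k : ℝ) (hk : k ∈ Set.Ioo (0:ℝ) 1)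
    (hT : A.IFContractiveWith k T) :
    ∃! p : X, T p = p := by
  obtain ⟨x₀⟩ := ‹Nonempty X›
  obtain ⟨p, hp⟩ := hcomp _ (hcs _ (hT.ifContractiveSeq_iterate hk x₀))
  have hfix : Function.IsFixedPt T p :=
    A.isFixedPt_of_converges_iterate (fun _ _ _ ht => hT.mu_le_mu_map hk.2.le ht) hp
  exact ⟨p, hfix, fun q hq => hT.eq_of_isFixedPt hk.2 hq hfix⟩

/-- Banach fixed point theorem for IF contractive mappings. -/
theorem ifContractive_fixed_point {X : Type*} [Nonempty X] (A : IFMS X)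
    (hcomp : A.Complete) (hspade : A.PropertySpade)
    (hcs : ∀ x : ℕ → X, A.IFContractiveSeq x → A.IsCauchySeq x)
    (T : X → X) (k : ℝ) (hk : k ∈ Set.Ioo (0:ℝ) 1)
    (hT : A.IFContractiveWith k T) :
    ∃! p : X, T p = p :=
  ifContractive_fixed_point_general A hcomp hcs T k hk hT
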